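/- Let d ≥ 1 and δ > (d−1)/4. Let a₁ ≥ a₂ > 0 and b₁, b₂ ≥ 0 be constants satisfying b₁ ≥ b₂ (a₁/a₂)^{d/2}, and let η ∈ ℝ^d. Then the function h ↦ b₁ (1 + a₁‖h‖²)^{−δ} − (b₂/2) [ (1 + a₂‖h − η‖²)^{−δ} + (1 + a₂‖h + η‖²)^{−δ} ] is a stationary covariance function on ℝ^d. -/

import Mathlib

open MeasureTheory
open scoped BigOperators RealInnerProductSpace

noncomputable section

/-- A function `C : ℝ^d → ℝ` is a stationary covariance function if it is
positive semidefinite. -/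
def IsStationaryCovariance (d : ℕ) (C : EuclideanSpace ℝ (Fin d) → ℝ) : Prop :=
  ∀ (n : ℕ) (x : Fin n → EuclideanSpace ℝ (Fin d)) (v : Fin n → ℝ),
    0 ≤ ∑ i, ∑ j, v i * v j * C (x i - x j)

/-- `φ : [0,∞) → ℝ` belongs to the class `Φ_d`. -/
def MemPhi (d : ℕ) (φ : ℝ → ℝ) : Prop :=
  ContinuousOn φ (Set.Ici 0) ∧ IsStationaryCovariance d (fun h => φ ‖h‖)

/-- `f` is a `d`-radial spectral density of `φ`. -/
def IsRadialSpectralDensity (d : ℕ) (φ f : ℝ → ℝ) : Prop :=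
  (∀ u : ℝ, 0 ≤ u → 0 ≤ f u) ∧
  MeasureTheory.Integrable (fun ω : EuclideanSpace ℝ (Fin d) => f ‖ω‖) ∧
  ∀ h : EuclideanSpace ℝ (Fin d),
    (φ ‖h‖ : ℂ) = ∫ ω : EuclideanSpace ℝ (Fin d),
      Complex.exp (Complex.I * ((⟪h, ω⟫ : ℝ) : ℂ)) * ((f ‖ω‖ : ℝ) : ℂ)

/-- The quadratic form `hᵀ A h`. -/
def quadForm {d : ℕ} (A : Matrix (Fin d) (Fin d) ℝ) (h : EuclideanSpace ℝ (Fin d)) : ℝ :=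
  ∑ i, ∑ j, h i * A i j * h j


/-!
The Cauchy model is a Gamma mixture of Gaussians, `(1 + u) ^ (-δ) = ∫ exp (-u s) dΓ(δ, 1)(s)`,
so the function is a mixture over `s > 0` of the same combination built from the Gaussians
`exp (-a s ‖h‖²)`, and mixtures of covariances are covariances. For Gaussians the combination is
the cosine transform of `b₁ g₁ w - b₂ cos ⟪η, w⟫ g₂ w`, where `gᵢ` is the Gaussian spectral
density of `exp (-cᵢ ‖h‖²)`. The condition `b₂ (c₁ / c₂) ^ (d / 2) ≤ b₁` with `c₂ ≤ c₁` gives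
`b₂ g₂ ≤ b₁ g₁` pointwise, so this spectral density is nonnegative, and a cosine transform of
a nonnegative integrable function is positive semidefinite because
`∑ᵢⱼ vᵢ vⱼ cos (θᵢ - θⱼ) = (∑ᵢ vᵢ cos θᵢ)² + (∑ᵢ vᵢ sin θᵢ)²`.
-/

open Real Set ProbabilityTheory

theorem sum_sum_mul_cos_sub {ι : Type*} [Fintype ι] (v θ : ι → ℝ) :
    ∑ i, ∑ j, v i * v j * cos (θ i - θ j) =
      (∑ i, v i * cos (θ i)) ^ 2 + (∑ i, v i * sin (θ i)) ^ 2 := by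
  simp_rw [sq, Finset.sum_mul_sum, ← Finset.sum_add_distrib, cos_sub]
  congr! 2
  ring

section Gaussian

variable {V : Type*} [NormedAddCommGroup V] [InnerProductSpace ℝ V] [FiniteDimensional ℝ V]
  [MeasurableSpace V] [BorelSpace V] {b : ℝ}

theorem integrable_exp_neg_mul_sq_norm (hb : 0 < b) :
    Integrable (fun v : V => exp (-b * ‖v‖ ^ 2)) := by
  have := (GaussianFourier.integrable_cexp_neg_mul_sq_norm_add
    (show 0 < (b : ℂ).re from hb) 0 (0 : V)).norm
  simpa [Complex.norm_exp, ← Complex.ofReal_pow] using this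

theorem integral_cos_inner_mul_exp_neg_mul_sq_norm (hb : 0 < b) (h : V) :
    ∫ v : V, cos ⟪h, v⟫ * exp (-b * ‖v‖ ^ 2) =
      (π / b) ^ (Module.finrank ℝ V / 2 : ℝ) * exp (-‖h‖ ^ 2 / (4 * b)) := by
  have hb' : 0 < (b : ℂ).re := hb
  have key := congrArg Complex.re
    (GaussianFourier.integral_cexp_neg_mul_sq_norm_add hb' Complex.I h)
  rw [← RCLike.re_to_complex,
    ← integral_re (GaussianFourier.integrable_cexp_neg_mul_sq_norm_add hb' _ h)] at key
  have hrhs : (π / b : ℂ) ^ (Module.finrank ℝ V / 2 : ℂ) *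
      Complex.exp (Complex.I ^ 2 * ‖h‖ ^ 2 / (4 * b)) =
      ((π / b) ^ (Module.finrank ℝ V / 2 : ℝ) * exp (-‖h‖ ^ 2 / (4 * b)) : ℝ) := by
    rw [Complex.ofReal_mul, Complex.ofReal_cpow (by positivity), Complex.ofReal_exp]
    push_cast
    rw [Complex.I_sq]
    ring_nf
  rw [hrhs, Complex.ofReal_re] at key
  rw [← key]
  congr 1 with v
  simp [Complex.exp_re, ← Complex.ofReal_pow, mul_comm]

end Gaussian

section GammaMixture

variable {a u : ℝ}

theorem gammaPDFReal_one_mul_exp_neg_mul {s : ℝ} (hs : 0 ≤ s) :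
    gammaPDFReal a 1 s * exp (-(u * s)) = (Gamma a)⁻¹ * (s ^ (a - 1) * exp (-((1 + u) * s))) := by
  rw [gammaPDFReal, if_pos hs, one_rpow, add_mul, neg_add, exp_add]
  ring

theorem integrableOn_gammaPDFReal_mul_exp_neg_mul (ha : 0 < a) (hu : -1 < u) :
    IntegrableOn (fun s => gammaPDFReal a 1 s * exp (-(u * s))) (Ioi 0) := by
  have := (integrableOn_rpow_mul_exp_neg_mul_rpow (s := a - 1) (by linarith) one_pos
    (show 0 < 1 + u by linarith)).const_mul (Gamma a)⁻¹
  refine IntegrableOn.congr_fun this (fun s hs => ?_) measurableSet_Ioi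
  rw [gammaPDFReal_one_mul_exp_neg_mul (le_of_lt hs), rpow_one, neg_mul]

theorem setIntegral_gammaPDFReal_mul_exp_neg_mul (ha : 0 < a) (hu : -1 < u) :
    ∫ s in Ioi 0, gammaPDFReal a 1 s * exp (-(u * s)) = (1 + u) ^ (-a) := by
  rw [setIntegral_congr_fun measurableSet_Ioi fun s hs => gammaPDFReal_one_mul_exp_neg_mul
    (a := a) (u := u) (le_of_lt hs), integral_const_mul,
    integral_rpow_mul_exp_neg_mul_Ioi ha (by linarith), one_div, inv_rpow (by linarith),
    rpow_neg (by linarith)]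
  field_simp [(Gamma_pos_of_pos ha).ne']

end GammaMixture

section

variable {d : ℕ}

theorem IsStationaryCovariance.const_mul {C : EuclideanSpace ℝ (Fin d) → ℝ}
    (hC : IsStationaryCovariance d C) {c : ℝ} (hc : 0 ≤ c) :
    IsStationaryCovariance d (fun h => c * C h) := by
  intro n x v
  have hsum : ∑ i, ∑ j, v i * v j * (c * C (x i - x j)) =
      c * ∑ i, ∑ j, v i * v j * C (x i - x j) := by
    simp_rw [Finset.mul_sum]
    congr! 2
    ring
  rw [hsum]
  exact mul_nonneg hc (hC n x v)

theorem IsStationaryCovariance.integral {α : Type*} [MeasurableSpace α] {μ : Measure α}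
    {C : α → EuclideanSpace ℝ (Fin d) → ℝ} (hC : ∀ᵐ s ∂μ, IsStationaryCovariance d (C s))
    (hint : ∀ h, Integrable (fun s => C s h) μ) :
    IsStationaryCovariance d (fun h => ∫ s, C s h ∂μ) := by
  intro n x v
  have hsum : ∑ i, ∑ j, v i * v j * ∫ s, C s (x i - x j) ∂μ =
      ∫ s, ∑ i, ∑ j, v i * v j * C s (x i - x j) ∂μ := by
    rw [integral_finsetSum _ fun i _ => integrable_finsetSum _ fun j _ => (hint _).const_mul _]
    refine Finset.sum_congr rfl fun i _ => ?_
    rw [integral_finsetSum _ fun j _ => (hint _).const_mul _]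
    simp_rw [integral_const_mul]
  rw [hsum]
  exact integral_nonneg_of_ae (hC.mono fun s hs => hs n x v)

theorem isStationaryCovariance_cos_inner (w : EuclideanSpace ℝ (Fin d)) :
    IsStationaryCovariance d (fun h => cos ⟪h, w⟫) := by
  intro n x v
  simp_rw [inner_sub_left, sum_sum_mul_cos_sub v (fun i => ⟪x i, w⟫)]
  positivity

def cosTransform (f : EuclideanSpace ℝ (Fin d) → ℝ) (h : EuclideanSpace ℝ (Fin d)) : ℝ :=
  ∫ w, cos ⟪h, w⟫ * f w

theorem integrable_cos_inner_mul {f : EuclideanSpace ℝ (Fin d) → ℝ} (hf : Integrable f)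
    (h : EuclideanSpace ℝ (Fin d)) : Integrable (fun w => cos ⟪h, w⟫ * f w) :=
  hf.bdd_mul (c := 1) (by fun_prop) (.of_forall fun w => by simpa using abs_cos_le_one _)

theorem isStationaryCovariance_cosTransform {f : EuclideanSpace ℝ (Fin d) → ℝ}
    (hf : Integrable f) (hf₀ : 0 ≤ f) : IsStationaryCovariance d (cosTransform f) := by
  refine IsStationaryCovariance.integral (.of_forall fun w => ?_) (integrable_cos_inner_mul hf)
  simpa only [mul_comm] using (isStationaryCovariance_cos_inner w).const_mul (hf₀ w)

def shiftedDifference (b₁ b₂ : ℝ) (η : EuclideanSpace ℝ (Fin d))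
    (φ₁ φ₂ : EuclideanSpace ℝ (Fin d) → ℝ) (h : EuclideanSpace ℝ (Fin d)) : ℝ :=
  b₁ * φ₁ h - b₂ / 2 * (φ₂ (h - η) + φ₂ (h + η))

variable {b₁ b₂ : ℝ} {η : EuclideanSpace ℝ (Fin d)}

theorem shiftedDifference_const_mul (c : ℝ) (φ₁ φ₂ : EuclideanSpace ℝ (Fin d) → ℝ) :
    shiftedDifference b₁ b₂ η (fun h => c * φ₁ h) (fun h => c * φ₂ h) =
      fun h => c * shiftedDifference b₁ b₂ η φ₁ φ₂ h := by
  ext h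
  simp only [shiftedDifference]
  ring

section Mixture

variable {α : Type*} [MeasurableSpace α] {μ : Measure α}
  {K₁ K₂ : α → EuclideanSpace ℝ (Fin d) → ℝ}

theorem integrable_shiftedDifference (hK₁ : ∀ h, Integrable (fun s => K₁ s h) μ)
    (hK₂ : ∀ h, Integrable (fun s => K₂ s h) μ) (h : EuclideanSpace ℝ (Fin d)) :
    Integrable (fun s => shiftedDifference b₁ b₂ η (K₁ s) (K₂ s) h) μ :=
  ((hK₁ h).const_mul _).sub (((hK₂ _).add (hK₂ _)).const_mul _)

theorem shiftedDifference_integral (hK₁ : ∀ h, Integrable (fun s => K₁ s h) μ)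
    (hK₂ : ∀ h, Integrable (fun s => K₂ s h) μ) :
    shiftedDifference b₁ b₂ η (fun h => ∫ s, K₁ s h ∂μ) (fun h => ∫ s, K₂ s h ∂μ) =
      fun h => ∫ s, shiftedDifference b₁ b₂ η (K₁ s) (K₂ s) h ∂μ := by
  ext h
  simp only [shiftedDifference]
  rw [integral_sub, integral_const_mul, integral_const_mul, integral_add (hK₂ _) (hK₂ _)]
  exacts [(hK₁ h).const_mul _, ((hK₂ _).add (hK₂ _)).const_mul _]

end Mixture

theorem shiftedDifference_cosTransform {f₁ f₂ : EuclideanSpace ℝ (Fin d) → ℝ}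
    (hf₁ : Integrable f₁) (hf₂ : Integrable f₂) :
    shiftedDifference b₁ b₂ η (cosTransform f₁) (cosTransform f₂) =
      cosTransform (fun w => b₁ * f₁ w - b₂ * cos ⟪η, w⟫ * f₂ w) := by
  unfold cosTransform
  rw [shiftedDifference_integral (integrable_cos_inner_mul hf₁)
    (integrable_cos_inner_mul hf₂)]
  ext h
  congr 1 with w
  simp only [shiftedDifference, inner_sub_left, inner_add_left, cos_sub, cos_add]
  ring

theorem isStationaryCovariance_shiftedDifference_cosTransform
    {f₁ f₂ : EuclideanSpace ℝ (Fin d) → ℝ} (hf₁ : Integrable f₁) (hf₂ : Integrable f₂)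
    (hf₂₀ : ∀ w, 0 ≤ b₂ * f₂ w) (hle : ∀ w, b₂ * f₂ w ≤ b₁ * f₁ w) :
    IsStationaryCovariance d (shiftedDifference b₁ b₂ η (cosTransform f₁) (cosTransform f₂)) := by
  rw [shiftedDifference_cosTransform hf₁ hf₂]
  refine isStationaryCovariance_cosTransform
    ((hf₁.const_mul _).sub (by simpa only [mul_assoc] using
      (integrable_cos_inner_mul hf₂ η).const_mul b₂)) fun w => ?_
  have hcos : b₂ * cos ⟪η, w⟫ * f₂ w ≤ b₂ * f₂ w := by
    rw [mul_right_comm]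
    exact mul_le_of_le_one_right (hf₂₀ w) (cos_le_one _)
  simp only [Pi.zero_apply, sub_nonneg]
  linarith [hle w]

def gaussianDensity (c : ℝ) (w : EuclideanSpace ℝ (Fin d)) : ℝ :=
  (4 * π * c) ^ (-((d : ℝ) / 2)) * exp (-(4 * c)⁻¹ * ‖w‖ ^ 2)

variable {c c₁ c₂ δ a : ℝ}

theorem gaussianDensity_nonneg (hc : 0 ≤ c) (w : EuclideanSpace ℝ (Fin d)) :
    0 ≤ gaussianDensity c w := by
  unfold gaussianDensity
  positivity

theorem integrable_gaussianDensity (hc : 0 < c) :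
    Integrable (gaussianDensity (d := d) c) :=
  (integrable_exp_neg_mul_sq_norm (by positivity)).const_mul _

theorem cosTransform_gaussianDensity (hc : 0 < c) :
    cosTransform (gaussianDensity (d := d) c) = fun h => exp (-(c * ‖h‖ ^ 2)) := by
  ext h
  unfold cosTransform gaussianDensity
  simp_rw [mul_left_comm (cos _)]
  rw [integral_const_mul, integral_cos_inner_mul_exp_neg_mul_sq_norm (by positivity),
    finrank_euclideanSpace_fin, ← mul_assoc, div_inv_eq_mul, mul_left_comm, ← mul_assoc,
    rpow_neg (by positivity), inv_mul_cancel₀ (by positivity), one_mul]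
  congr 1
  field_simp

theorem mul_gaussianDensity_le (hc₂ : 0 < c₂) (hc : c₂ ≤ c₁) (hb₂ : 0 ≤ b₂)
    (hcond : b₂ * (c₁ / c₂) ^ ((d : ℝ) / 2) ≤ b₁) (w : EuclideanSpace ℝ (Fin d)) :
    b₂ * gaussianDensity c₂ w ≤ b₁ * gaussianDensity c₁ w := by
  have hc₁ : 0 < c₁ := hc₂.trans_le hc
  have hb₁ : 0 ≤ b₁ := (mul_nonneg hb₂ (by positivity)).trans hcond
  have hscale : (4 * π * c₂) ^ (-((d : ℝ) / 2)) =
      (c₁ / c₂) ^ ((d : ℝ) / 2) * (4 * π * c₁) ^ (-((d : ℝ) / 2)) := by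
    rw [rpow_neg (by positivity), rpow_neg (by positivity), mul_rpow (by positivity) hc₁.le,
      mul_rpow (by positivity) hc₂.le, div_rpow hc₁.le hc₂.le]
    field_simp
  have hexp : exp (-(4 * c₂)⁻¹ * ‖w‖ ^ 2) ≤ exp (-(4 * c₁)⁻¹ * ‖w‖ ^ 2) := by
    gcongr
  calc b₂ * gaussianDensity c₂ w
      = b₂ * (c₁ / c₂) ^ ((d : ℝ) / 2) *
          ((4 * π * c₁) ^ (-((d : ℝ) / 2)) * exp (-(4 * c₂)⁻¹ * ‖w‖ ^ 2)) := by
        rw [gaussianDensity, hscale]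
        ring
    _ ≤ b₁ * ((4 * π * c₁) ^ (-((d : ℝ) / 2)) * exp (-(4 * c₂)⁻¹ * ‖w‖ ^ 2)) := by
        gcongr
    _ ≤ b₁ * gaussianDensity c₁ w := by
        unfold gaussianDensity
        gcongr

theorem isStationaryCovariance_shiftedDifference_exp_neg_mul_sq_norm (hc₂ : 0 < c₂)
    (hc : c₂ ≤ c₁) (hb₂ : 0 ≤ b₂) (hcond : b₂ * (c₁ / c₂) ^ ((d : ℝ) / 2) ≤ b₁) :
    IsStationaryCovariance d (shiftedDifference b₁ b₂ η
      (fun h => exp (-(c₁ * ‖h‖ ^ 2))) (fun h => exp (-(c₂ * ‖h‖ ^ 2)))) := by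
  have hc₁ : 0 < c₁ := hc₂.trans_le hc
  have := isStationaryCovariance_shiftedDifference_cosTransform (η := η)
    (integrable_gaussianDensity hc₁) (integrable_gaussianDensity hc₂)
    (fun w => mul_nonneg hb₂ (gaussianDensity_nonneg hc₂.le w))
    (mul_gaussianDensity_le hc₂ hc hb₂ hcond)
  rwa [cosTransform_gaussianDensity hc₁, cosTransform_gaussianDensity hc₂] at this

theorem integrableOn_gammaPDFReal_mul_exp_neg_mul_sq_norm (hδ : 0 < δ) (ha : 0 ≤ a)
    (h : EuclideanSpace ℝ (Fin d)) :
    IntegrableOn (fun s => gammaPDFReal δ 1 s * exp (-(a * s * ‖h‖ ^ 2))) (Ioi 0) := by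
  refine (integrableOn_gammaPDFReal_mul_exp_neg_mul hδ (u := a * ‖h‖ ^ 2)
    (neg_one_lt_zero.trans_le (by positivity))).congr_fun (fun s _ => ?_) measurableSet_Ioi
  rw [mul_right_comm a]

theorem one_add_mul_sq_norm_rpow_neg_eq_integral (hδ : 0 < δ) (ha : 0 ≤ a) :
    (fun h : EuclideanSpace ℝ (Fin d) => (1 + a * ‖h‖ ^ 2) ^ (-δ)) =
      fun h => ∫ s in Ioi 0, gammaPDFReal δ 1 s * exp (-(a * s * ‖h‖ ^ 2)) := by
  ext h
  rw [← setIntegral_gammaPDFReal_mul_exp_neg_mul hδ (u := a * ‖h‖ ^ 2)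
    (neg_one_lt_zero.trans_le (by positivity))]
  simp only [mul_right_comm a]

end

theorem statement_12_general (d : ℕ) (hd : 1 ≤ d) (δ : ℝ) (hδ : ((d : ℝ) - 1) / 4 < δ)
    (a₁ a₂ b₁ b₂ : ℝ) (ha₂ : 0 < a₂) (ha : a₂ ≤ a₁) (hb₂ : 0 ≤ b₂)
    (hcond : b₂ * (a₁ / a₂) ^ ((d : ℝ) / 2) ≤ b₁)
    (η : EuclideanSpace ℝ (Fin d)) :
    IsStationaryCovariance d
      (fun h => b₁ * (1 + a₁ * ‖h‖ ^ 2) ^ (-δ) -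
        b₂ / 2 * ((1 + a₂ * ‖h - η‖ ^ 2) ^ (-δ) + (1 + a₂ * ‖h + η‖ ^ 2) ^ (-δ))) := by
  have hδ₀ : 0 < δ :=
    lt_of_le_of_lt (div_nonneg (sub_nonneg.2 (by exact_mod_cast hd)) zero_le_four) hδ
  have ha₁ : 0 < a₁ := ha₂.trans_le ha
  have hint₁ := integrableOn_gammaPDFReal_mul_exp_neg_mul_sq_norm (d := d) hδ₀ ha₁.le
  have hint₂ := integrableOn_gammaPDFReal_mul_exp_neg_mul_sq_norm (d := d) hδ₀ ha₂.le
  change IsStationaryCovariance d (shiftedDifference b₁ b₂ η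
    (fun h => (1 + a₁ * ‖h‖ ^ 2) ^ (-δ)) (fun h => (1 + a₂ * ‖h‖ ^ 2) ^ (-δ)))
  rw [one_add_mul_sq_norm_rpow_neg_eq_integral hδ₀ ha₁.le,
    one_add_mul_sq_norm_rpow_neg_eq_integral hδ₀ ha₂.le, shiftedDifference_integral hint₁ hint₂]
  refine IsStationaryCovariance.integral ?_ (integrable_shiftedDifference hint₁ hint₂)
  filter_upwards [ae_restrict_mem measurableSet_Ioi] with s (hs : 0 < s)
  rw [shiftedDifference_const_mul]
  refine (isStationaryCovariance_shiftedDifference_exp_neg_mul_sq_norm (mul_pos ha₂ hs)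
    (by gcongr) hb₂ ?_).const_mul (gammaPDFReal_nonneg hδ₀ one_pos s)
  rwa [mul_div_mul_right _ _ hs.ne']

theorem statement_12 (d : ℕ) (hd : 1 ≤ d) (δ : ℝ) (hδ : ((d : ℝ) - 1) / 4 < δ)
    (a₁ a₂ b₁ b₂ : ℝ) (ha₂ : 0 < a₂) (ha : a₂ ≤ a₁) (hb₁ : 0 ≤ b₁) (hb₂ : 0 ≤ b₂)
    (hcond : b₂ * (a₁ / a₂) ^ ((d : ℝ) / 2) ≤ b₁)
    (η : EuclideanSpace ℝ (Fin d)) :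
    IsStationaryCovariance d
      (fun h => b₁ * (1 + a₁ * ‖h‖ ^ 2) ^ (-δ) -
        b₂ / 2 * ((1 + a₂ * ‖h - η‖ ^ 2) ^ (-δ) + (1 + a₂ * ‖h + η‖ ^ 2) ^ (-δ))) :=
  statement_12_general d hd δ hδ a₁ a₂ b₁ b₂ ha₂ ha hb₂ hcond η
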